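/- Let (q_n)_{n≥0} satisfy q_0 = 1, q_n > 0, q_{n+1}/q_n ≥ q_n/q_{n−1} for n ≥ 1, and q_n/Q_n → 0 where Q_n = ∑_{k=0}^{n} q_k; let (γ_n) be defined by γ_0 = 1 and ∑_{k=0}^{n} q_{n−k} γ_k = 0 for n ≥ 1, and let (α_n) with α_n ∈ (0,1). Then for every fixed k, the coefficient t_{k,n} = (∑_{l=0}^{n−k} A_{n−k−l}^{α_n−1} γ_l) Q_k / A_n^{α_n} tends to 0 as n → ∞. -/
import Mathlib


open Finset Filter

/-- `A_n^α = (1+α)(2+α)⋯(n+α)/n!`, with `A_0^α = 1`. -/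
noncomputable def cesA (n : ℕ) (α : ℝ) : ℝ :=
  (∏ i ∈ Finset.range n, ((i : ℝ) + 1 + α)) / (n.factorial : ℝ)

/-- `Q_n = ∑_{k=0}^n q_k`. -/
noncomputable def bigQ (q : ℕ → ℝ) (n : ℕ) : ℝ := ∑ k ∈ Finset.range (n + 1), q k

set_option maxHeartbeats 1000000

lemma cesA_zero (α : ℝ) : cesA 0 α = 1 := by simp [cesA]

lemma cesA_succ (n : ℕ) (α : ℝ) :
    cesA (n+1) α = cesA n α * (((n:ℝ) + 1 + α) / ((n:ℝ) + 1)) := by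
  have h1 : ((n+1).factorial : ℝ) = (n.factorial : ℝ) * ((n:ℝ)+1) := by
    push_cast [Nat.factorial_succ]; ring
  have h2 : (n.factorial : ℝ) ≠ 0 := by positivity
  rw [cesA, cesA, prod_range_succ, h1]
  field_simp

lemma cesA_pos {α : ℝ} (hα : -1 < α) (n : ℕ) : 0 < cesA n α := by
  apply div_pos
  · apply prod_pos; intro i _; have : (0:ℝ) ≤ i := Nat.cast_nonneg i; linarith
  · positivity

section beta
variable {β : ℝ} (hβ0 : 0 < β) (hβ1 : β ≤ 1)

lemma aA_succ (n : ℕ) : cesA (n+1) (β-1) = cesA n (β-1) * (((n:ℝ) + β) / ((n:ℝ) + 1)) := by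
  rw [cesA_succ]; ring_nf

include hβ0 in
lemma aA_pos (n : ℕ) : 0 < cesA n (β-1) := cesA_pos (by linarith) n

include hβ0 hβ1 in
lemma aA_antitone_succ (n : ℕ) : cesA (n+1) (β-1) ≤ cesA n (β-1) := by
  rw [aA_succ]
  have h1 : ((n:ℝ) + β)/((n:ℝ)+1) ≤ 1 := by
    apply div_le_one_of_le₀ <;> [linarith [Nat.cast_nonneg (α := ℝ) n]; positivity]
  nlinarith [aA_pos hβ0 n, Nat.cast_nonneg (α := ℝ) n]

include hβ0 hβ1 in
lemma aA_antitone (j d : ℕ) : cesA (j+d) (β-1) ≤ cesA j (β-1) := by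
  induction d with
  | zero => simp
  | succ d ih => exact le_trans (aA_antitone_succ hβ0 hβ1 (j+d)) ih

include hβ0 hβ1 in
lemma aA_le_one (n : ℕ) : cesA n (β-1) ≤ 1 := by
  simpa [cesA_zero] using aA_antitone hβ0 hβ1 0 n

include hβ0 in
lemma aA_identity (n : ℕ) : cesA n (β-1) * ((n:ℝ) + β) = cesA n β * β := by
  induction n with
  | zero => simp [cesA_zero]
  | succ n ih =>
      rw [aA_succ, cesA_succ]
      have h1 : ((n:ℝ)+1) ≠ 0 := by positivity
      field_simp
      push_cast
      nlinarith [ih]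

include hβ0 in
lemma A_one_le (n : ℕ) : 1 ≤ cesA n β := by
  induction n with
  | zero => simp [cesA_zero]
  | succ n ih =>
      rw [cesA_succ]
      have h2 : (1:ℝ) ≤ ((n:ℝ) + 1 + β)/((n:ℝ)+1) := by
        rw [le_div_iff₀ (by positivity)]; linarith
      nlinarith

include hβ0 in
lemma A_mono (n d : ℕ) : cesA n β ≤ cesA (n+d) β := by
  induction d with
  | zero => simp
  | succ d ih =>
      refine le_trans ih ?_
      show cesA (n+d) β ≤ cesA ((n+d)+1) β
      rw [cesA_succ]
      have h2 : (1:ℝ) ≤ ((n:ℝ) + d + 1 + β)/((n:ℝ) + d +1) := by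
        rw [le_div_iff₀ (by positivity)]
        push_cast; linarith [Nat.cast_nonneg (α := ℝ) n, Nat.cast_nonneg (α := ℝ) d]
      have := cesA_pos (show (-1:ℝ) < β by linarith) (n+d)
      push_cast
      nlinarith

-- a_j - a_{j+d} ≤ (1-β) d a_j / (j+1)
include hβ0 hβ1 in
lemma aA_diff (j d : ℕ) :
    cesA j (β-1) - cesA (j+d) (β-1) ≤ (1-β) * d * cesA j (β-1) / ((j:ℝ)+1) := by
  induction d with
  | zero => simp
  | succ d ih =>
      have hstep : cesA (j+d) (β-1) - cesA (j+d+1) (β-1)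
          = cesA (j+d) (β-1) * (1-β) / ((j:ℝ)+d+1) := by
        rw [aA_succ]
        have : ((j:ℝ)+d+1) ≠ 0 := by positivity
        field_simp
        push_cast
        ring
      have hle : cesA (j+d) (β-1) * (1-β) / ((j:ℝ)+d+1)
          ≤ (1-β) * cesA j (β-1) / ((j:ℝ)+1) := by
        have h1 := aA_antitone hβ0 hβ1 j d
        have h2 : ((j:ℝ)+1) ≤ ((j:ℝ)+d+1) := by
          have : (0:ℝ) ≤ d := Nat.cast_nonneg d
          linarith
        have h3 := aA_pos hβ0 (j+d)
        have h4 := aA_pos hβ0 j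
        apply div_le_div₀ (by nlinarith) (by nlinarith) (by positivity) h2
      have hsum : cesA j (β-1) - cesA (j+(d+1)) (β-1)
          = (cesA j (β-1) - cesA (j+d) (β-1)) + (cesA (j+d) (β-1) - cesA (j+d+1) (β-1)) := by
        have : j + (d+1) = (j+d)+1 := by ring
        rw [this]; ring
      rw [hsum, hstep]
      push_cast
      have hsplit : (1-β)*((d:ℝ)+1)*cesA j (β-1)/((j:ℝ)+1)
          = (1-β)*(d:ℝ)*cesA j (β-1)/((j:ℝ)+1) + (1-β)*cesA j (β-1)/((j:ℝ)+1) := by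
        ring
      rw [hsplit]
      linarith [ih, hle]

-- j * a_j is nondecreasing
include hβ0 in
lemma aA_mul_mono (j d : ℕ) :
    cesA j (β-1) * (j:ℝ) ≤ cesA (j+d) (β-1) * ((j:ℝ)+(d:ℝ)) := by
  induction d with
  | zero => simp
  | succ d ih =>
      have h1 : cesA ((j+d)+1) (β-1) * ((j:ℝ)+d+1)
          = cesA (j+d) (β-1) * ((j:ℝ)+(d:ℝ)+β) := by
        rw [aA_succ]
        have : ((j:ℝ)+(d:ℝ)+1) ≠ 0 := by positivity
        push_cast
        field_simp
      have h2 : j + (d+1) = (j+d)+1 := rfl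
      rw [h2]
      push_cast
      have h3 : cesA (j+d) (β-1) * ((j:ℝ)+(d:ℝ)) ≤ cesA (j+d) (β-1) * ((j:ℝ)+(d:ℝ)+β) := by
        nlinarith [aA_pos hβ0 (j+d)]
      calc cesA j (β-1) * (j:ℝ) ≤ cesA (j+d) (β-1) * ((j:ℝ)+(d:ℝ)) := ih
        _ ≤ cesA (j+d) (β-1) * ((j:ℝ)+(d:ℝ)+β) := h3
        _ = cesA ((j+d)+1) (β-1) * ((j:ℝ)+(d:ℝ)+1) := h1.symm
        _ = cesA ((j+d)+1) (β-1) * ((j:ℝ)+((d:ℝ)+1)) := by ring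

end beta

section qfacts
variable {q : ℕ → ℝ} (hq0 : q 0 = 1) (hqpos : ∀ m, 0 < q m)
  (hqconv : ∀ m, 1 ≤ m → q m / q (m - 1) ≤ q (m + 1) / q m)

include hqconv in
lemma ratio_mono : ∀ i j, 1 ≤ i → i ≤ j → q i / q (i-1) ≤ q j / q (j-1) := by
  intro i j hi hij
  induction j, hij using Nat.le_induction with
  | base => exact le_refl _
  | succ j hj ih =>
      refine le_trans ih ?_
      have := hqconv j (le_trans hi hj)
      simpa using this

variable {γ : ℕ → ℝ} (hγ0 : γ 0 = 1)
  (hγ : ∀ m, 1 ≤ m → ∑ j ∈ Finset.range (m + 1), q (m - j) * γ j = 0)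

include hq0 hqpos hqconv hγ0 hγ in
lemma gamma_nonpos : ∀ n, 1 ≤ n → γ n ≤ 0 := by
  intro n
  induction n using Nat.strong_induction_on with
  | _ n ih =>
    intro hn1
    have h1' : ∑ j ∈ range n, q (n - j) * γ j + γ n = 0 := by
      have := hγ n hn1
      rw [Finset.sum_range_succ] at this
      simpa [hq0] using this
    rcases Nat.lt_or_ge n 2 with h2 | h2
    · -- n = 1
      interval_cases n
      · have := h1'
        simp [hγ0] at this
        nlinarith [hqpos 1]
    · -- n ≥ 2
      have hn1' : 1 ≤ n - 1 := by omega
      have h2' : ∑ j ∈ range n, q (n - 1 - j) * γ j = 0 := by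
        have := hγ (n-1) hn1'
        rw [show n - 1 + 1 = n by omega] at this
        exact this
      have key : q (n-1) * γ n
          = - ∑ j ∈ range n, (q (n-1) * q (n-j) - q n * q (n-1-j)) * γ j := by
        have hsplit : ∑ j ∈ range n, (q (n-1) * q (n-j) - q n * q (n-1-j)) * γ j
            = q (n-1) * (∑ j ∈ range n, q (n-j) * γ j)
              - q n * (∑ j ∈ range n, q (n-1-j) * γ j) := by
          rw [Finset.mul_sum, Finset.mul_sum, ← Finset.sum_sub_distrib]
          apply Finset.sum_congr rfl; intros; ring
        rw [hsplit, h2']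
        have : ∑ j ∈ range n, q (n - j) * γ j = -γ n := by linarith
        rw [this]; ring
      have hnonneg : 0 ≤ ∑ j ∈ range n, (q (n-1) * q (n-j) - q n * q (n-1-j)) * γ j := by
        apply Finset.sum_nonneg
        intro j hj
        rcases Nat.eq_zero_or_pos j with rfl | hj1
        · simp [mul_comm]
        · have hjlt : j < n := Finset.mem_range.mp hj
          have hγj : γ j ≤ 0 := ih j hjlt hj1
          have hij1 : 1 ≤ n - j := by omega
          have hij2 : n - j ≤ n := by omega
          have hr := ratio_mono hqconv (n-j) n hij1 hij2
          rw [div_le_div_iff₀ (hqpos _) (hqpos _)] at hr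
          have hidx : n - j - 1 = n - 1 - j := by omega
          rw [hidx] at hr
          have hc : q (n-1) * q (n-j) - q n * q (n-1-j) ≤ 0 := by
            nlinarith [hr]
          nlinarith [hc, hγj]
      have := hqpos (n-1)
      nlinarith [key, hnonneg]

include hqpos in
lemma bigQ_pos (n : ℕ) : 0 < bigQ q n := by
  apply Finset.sum_pos (fun i _ => hqpos i)
  exact ⟨0, Finset.mem_range.mpr (Nat.succ_pos n)⟩

variable (hqQ : Filter.Tendsto (fun m => q m / bigQ q m) Filter.atTop (nhds 0))

include hqpos hqconv hqQ in
lemma q_antitone_succ : ∀ m, q (m+1) ≤ q m := by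
  intro m
  by_contra hcon
  push_neg at hcon
  set r := q (m+1) / q m with hr
  have hr1 : 1 < r := (one_lt_div (hqpos m)).mpr hcon
  have hr0 : 0 < r := by linarith
  have step1 : ∀ j, m ≤ j → r ≤ q (j+1) / q j := by
    intro j hj
    induction j, hj using Nat.le_induction with
    | base => exact le_refl _
    | succ j hj ih =>
        refine le_trans ih ?_
        have := hqconv (j+1) (by omega)
        simpa using this
  have step1' : ∀ j, m ≤ j → r * q j ≤ q (j+1) := by
    intro j hj
    have := step1 j hj
    rw [le_div_iff₀ (hqpos j)] at this
    linarith
  have step2 : ∀ i, q m * r^i ≤ q (m+i) := by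
    intro i
    induction i with
    | zero => simp
    | succ i ih =>
        have h1 : q m * r^(i+1) = (q m * r^i) * r := by ring
        have h2 : (q m * r^i) * r ≤ q (m+i) * r := by nlinarith
        have h3 := step1' (m+i) (Nat.le_add_right m i)
        calc q m * r^(i+1) ≤ q (m+i) * r := by nlinarith
          _ ≤ q (m+i+1) := by nlinarith
  have qmono : ∀ j i, m ≤ j → q j ≤ q (j+i) := by
    intro j i hj
    induction i with
    | zero => simp
    | succ i ih =>
        have := step1' (j+i) (by omega)
        have := hqpos (j+i)
        calc q j ≤ q (j+i) := ih
          _ ≤ q (j+i+1) := by nlinarith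
  set c := r / (r-1) with hc
  have hc0 : 0 < c := by apply div_pos hr0; linarith
  have hcr : c * (r - 1) = r := div_mul_cancel₀ r (by linarith : r - 1 ≠ 0)
  have step3 : ∀ n, m ≤ n → bigQ q n ≤ bigQ q m + c * q n := by
    intro n hn
    induction n, hn using Nat.le_induction with
    | base => nlinarith [hqpos m]
    | succ n hn ih =>
        have hQ : bigQ q (n+1) = bigQ q n + q (n+1) := by
          rw [bigQ, bigQ, Finset.sum_range_succ]
        have h1 := step1' n hn
        have h2 := hqpos n
        have h3 := hqpos (n+1)
        rw [hQ]
        have key : c * q n + q (n+1) ≤ c * q (n+1) := by nlinarith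
        linarith
  -- choose N from hqQ
  have hev : ∀ᶠ n in atTop, q n / bigQ q n < 1/(1+c) := by
    apply hqQ.eventually_lt_const
    positivity
  obtain ⟨N, hN⟩ := Filter.eventually_atTop.mp hev
  -- choose i with q m * r^i > bigQ q m
  obtain ⟨i, hi⟩ := pow_unbounded_of_one_lt (bigQ q m / q m) hr1
  have hqi : bigQ q m < q (m+i) := by
    rw [div_lt_iff₀ (hqpos m)] at hi
    calc bigQ q m < r ^ i * q m := hi
      _ = q m * r ^ i := by ring
      _ ≤ q (m+i) := step2 i
  set n := max N (m+i) with hn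
  have hnN : N ≤ n := le_max_left _ _
  have hnmi : m + i ≤ n := le_max_right _ _
  have hqn : bigQ q m < q n := by
    have : q (m+i) ≤ q ((m+i) + (n - (m+i))) := qmono (m+i) _ (by omega)
    rw [show (m+i) + (n - (m+i)) = n by omega] at this
    linarith
  have hQn : bigQ q n ≤ (1+c) * q n := by
    have := step3 n (by omega)
    nlinarith
  have h1 : 1/(1+c) ≤ q n / bigQ q n := by
    rw [div_le_div_iff₀ (by positivity) (bigQ_pos hqpos n)]
    nlinarith [hqpos n]
  have := hN n hnN
  linarith

include hq0 hqpos hqconv hqQ in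
lemma q_antitone : ∀ i j, i ≤ j → q j ≤ q i := by
  intro i j hij
  induction j, hij using Nat.le_induction with
  | base => exact le_refl _
  | succ j hj ih => exact le_trans (q_antitone_succ hqpos hqconv hqQ j) ih

include hq0 hqpos hqconv hγ0 hγ hqQ in
lemma gamma_abs_sum_le_one : ∀ m, ∑ i ∈ range m, (-γ (i+1)) ≤ 1 := by
  intro m
  rcases Nat.eq_zero_or_pos m with rfl | hm
  · simp
  · have h := hγ m hm
    rw [Finset.sum_range_succ'] at h
    simp only [Nat.sub_zero, hγ0, mul_one] at h
    have hsum : ∑ i ∈ range m, q (m - (i+1)) * (-γ (i+1)) = q m := by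
      have : ∑ i ∈ range m, q (m - (i+1)) * (-γ (i+1))
          = - ∑ i ∈ range m, q (m - (i+1)) * γ (i+1) := by
        rw [← Finset.sum_neg_distrib]
        apply Finset.sum_congr rfl; intros; ring
      rw [this]; linarith
    have hterm : ∀ i ∈ range m, q m * (-γ (i+1)) ≤ q (m - (i+1)) * (-γ (i+1)) := by
      intro i hi
      have hg : 0 ≤ -γ (i+1) :=
        neg_nonneg.mpr (gamma_nonpos hq0 hqpos hqconv hγ0 hγ (i+1) (Nat.succ_pos i))
      have hq : q m ≤ q (m - (i+1)) := q_antitone hq0 hqpos hqconv hqQ _ _ (by omega)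
      nlinarith
    have : q m * ∑ i ∈ range m, (-γ (i+1)) ≤ q m := by
      rw [Finset.mul_sum]
      calc ∑ i ∈ range m, q m * (-γ (i+1)) ≤ ∑ i ∈ range m, q (m - (i+1)) * (-γ (i+1)) :=
            Finset.sum_le_sum hterm
        _ = q m := hsum
    have hqm := hqpos m
    nlinarith

end qfacts

-- Core bound: |S_m(β)| ≤ (1/m + L²/(m-L)² + tail) * A_m^β
lemma key_bound (γ : ℕ → ℝ) (hγ0 : γ 0 = 1)
    (hg : ∀ i, 0 ≤ -γ (i+1))
    (hsum : ∀ m, ∑ i ∈ range m, (-γ (i+1)) ≤ 1)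
    {β : ℝ} (hβ0 : 0 < β) (hβ1 : β ≤ 1)
    (L m : ℕ) (hL : 1 ≤ L) (hm : 2*L ≤ m) :
    |∑ l ∈ range (m+1), cesA (m - l) (β-1) * γ l|
      ≤ (1/(m:ℝ) + (L:ℝ)^2/(((m - L : ℕ):ℝ))^2 + ∑ i ∈ Ico L m, (-γ (i+1))) * cesA m β := by
  have hm1 : 1 ≤ m := by omega
  have hLm : L ≤ m := by omega
  have hmL1 : 1 ≤ m - L := by omega
  set A := cesA m β with hA
  have hA1 : (1:ℝ) ≤ A := A_one_le hβ0 m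
  have hA0 : (0:ℝ) < A := by linarith
  have hm0 : (0:ℝ) < (m:ℝ) := by exact_mod_cast hm1
  have hmL0 : (0:ℝ) < ((m - L : ℕ):ℝ) := by exact_mod_cast hmL1
  have hX0 : (0:ℝ) ≤ (L:ℝ)^2/(((m - L : ℕ):ℝ))^2 := by positivity
  have hY0 : (0:ℝ) ≤ ∑ i ∈ Ico L m, (-γ (i+1)) := Finset.sum_nonneg (fun i _ => hg i)
  -- shift the sum
  have hshift : ∑ l ∈ range (m+1), cesA (m - l) (β-1) * γ l
      = cesA m (β-1) + ∑ i ∈ range m, cesA (m - (i+1)) (β-1) * γ (i+1) := by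
    rw [Finset.sum_range_succ']
    simp [hγ0]
    ring
  -- a_m * m ≤ A
  have hamid : cesA m (β-1) * ((m:ℝ)+β) = A * β := aA_identity hβ0 m
  have ham0 : 0 < cesA m (β-1) := aA_pos hβ0 m
  have ham : cesA m (β-1) * (m:ℝ) ≤ A := by nlinarith
  have hamm : cesA m (β-1) ≤ 1/(m:ℝ) * A := by
    rw [div_mul_eq_mul_div, le_div_iff₀ hm0]
    linarith
  -- upper bound
  have hupper : ∑ l ∈ range (m+1), cesA (m - l) (β-1) * γ l
      ≤ (1/(m:ℝ) + (L:ℝ)^2/(((m - L : ℕ):ℝ))^2 + ∑ i ∈ Ico L m, (-γ (i+1))) * A := by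
    rw [hshift]
    have hneg : ∑ i ∈ range m, cesA (m - (i+1)) (β-1) * γ (i+1) ≤ 0 := by
      apply Finset.sum_nonpos
      intro i _
      have h1 := aA_pos hβ0 (m - (i+1))
      have h2 := hg i
      nlinarith
    nlinarith
  -- decomposition for lower bound
  set D := ∑ i ∈ range m, (cesA (m - (i+1)) (β-1) - cesA m (β-1)) * (-γ (i+1)) with hD
  have hSD : ∑ l ∈ range (m+1), cesA (m - l) (β-1) * γ l
      = cesA m (β-1) * (1 - ∑ i ∈ range m, (-γ (i+1))) - D := by
    rw [hshift, hD]
    have hterm : ∀ i ∈ range m, cesA (m - (i+1)) (β-1) * γ (i+1)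
        = -(cesA m (β-1) * (-γ (i+1)))
          - (cesA (m - (i+1)) (β-1) - cesA m (β-1)) * (-γ (i+1)) := by
      intros; ring
    rw [Finset.sum_congr rfl hterm, Finset.sum_sub_distrib, Finset.sum_neg_distrib,
      ← Finset.mul_sum]
    ring
  -- per-term bound for i < L
  have hcore : ∀ i ∈ range L, cesA (m - (i+1)) (β-1) - cesA m (β-1)
      ≤ (L:ℝ)/(((m - L : ℕ):ℝ))^2 * A := by
    intro i hi
    have hiL : i + 1 ≤ L := Finset.mem_range.mp hi
    set j := m - (i+1) with hj
    have hjl : j + (i+1) = m := by omega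
    have hjL : m - L ≤ j := by omega
    have hj1 : 1 ≤ j := by omega
    have hj0 : (0:ℝ) < (j:ℝ) := by exact_mod_cast hj1
    have hjcast : ((m - L : ℕ):ℝ) ≤ (j:ℝ) := by exact_mod_cast hjL
    have hd0 : 0 ≤ cesA j (β-1) - cesA m (β-1) := by
      have := aA_antitone hβ0 hβ1 j (i+1)
      rw [hjl] at this
      linarith
    set d := cesA j (β-1) - cesA m (β-1) with hd
    have h6 := aA_diff hβ0 hβ1 j (i+1)
    rw [hjl] at h6
    have X1 : d * ((j:ℝ)+1) ≤ (1-β) * ((i:ℝ)+1) * cesA j (β-1) := by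
      rw [← le_div_iff₀ (by positivity : (0:ℝ) < (j:ℝ)+1)]
      calc d ≤ (1-β) * ((i+1:ℕ):ℝ) * cesA j (β-1) / ((j:ℝ)+1) := h6
        _ = (1-β) * ((i:ℝ)+1) * cesA j (β-1) / ((j:ℝ)+1) := by push_cast; ring
    have h7 := aA_mul_mono hβ0 j (i+1)
    have hjcast2 : (j:ℝ) + ((i+1:ℕ):ℝ) = (m:ℝ) := by exact_mod_cast congrArg Nat.cast hjl
    have X2 : cesA j (β-1) * (j:ℝ) ≤ cesA m (β-1) * (m:ℝ) := by
      rw [hjl] at h7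
      calc cesA j (β-1) * (j:ℝ) ≤ cesA m (β-1) * ((j:ℝ) + ((i+1:ℕ):ℝ)) := by
            push_cast at h7 ⊢; linarith
        _ = cesA m (β-1) * (m:ℝ) := by rw [hjcast2]
    have X3 : cesA m (β-1) * (m:ℝ) ≤ A * β := by nlinarith
    -- chain: d * mL^2 ≤ L * A
    have hβ2 : β * (1-β) ≤ 1 := by nlinarith
    have hiL' : ((i:ℝ)+1) ≤ (L:ℝ) := by exact_mod_cast hiL
    have hfinal : d * (((m - L : ℕ):ℝ))^2 ≤ (L:ℝ) * A := by
      have c1 : d * (((m - L : ℕ):ℝ))^2 ≤ d * ((j:ℝ) * ((j:ℝ)+1)) := by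
        apply mul_le_mul_of_nonneg_left _ hd0
        nlinarith
      have c3 : (d * ((j:ℝ)+1)) * (j:ℝ) ≤ ((1-β) * ((i:ℝ)+1) * cesA j (β-1)) * (j:ℝ) :=
        mul_le_mul_of_nonneg_right X1 (le_of_lt hj0)
      have c5 : (1-β) * ((i:ℝ)+1) * (cesA j (β-1) * (j:ℝ)) ≤ (1-β) * ((i:ℝ)+1) * (A*β) := by
        apply mul_le_mul_of_nonneg_left (X2.trans X3)
        nlinarith
      have c6 : (1-β) * ((i:ℝ)+1) * (A*β) ≤ (L:ℝ) * A := by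
        have e1 : ((i:ℝ)+1) * A * (β*(1-β)) ≤ ((i:ℝ)+1) * A * 1 :=
          mul_le_mul_of_nonneg_left hβ2 (by positivity)
        have e2 : ((i:ℝ)+1) * A ≤ (L:ℝ) * A := mul_le_mul_of_nonneg_right hiL' hA0.le
        nlinarith [e1, e2]
      calc d * (((m - L : ℕ):ℝ))^2 ≤ d * ((j:ℝ) * ((j:ℝ)+1)) := c1
        _ = (d * ((j:ℝ)+1)) * (j:ℝ) := by ring
        _ ≤ ((1-β) * ((i:ℝ)+1) * cesA j (β-1)) * (j:ℝ) := c3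
        _ = (1-β) * ((i:ℝ)+1) * (cesA j (β-1) * (j:ℝ)) := by ring
        _ ≤ (1-β) * ((i:ℝ)+1) * (A*β) := c5
        _ ≤ (L:ℝ) * A := c6
    rw [div_mul_eq_mul_div, le_div_iff₀ (by positivity)]
    linarith
  -- D ≤ (X + Y) * A
  have hDbound : D ≤ ((L:ℝ)^2/(((m - L : ℕ):ℝ))^2 + ∑ i ∈ Ico L m, (-γ (i+1))) * A := by
    rw [hD, ← Finset.sum_range_add_sum_Ico _ hLm]
    have hpart1 : ∑ i ∈ range L, (cesA (m - (i+1)) (β-1) - cesA m (β-1)) * (-γ (i+1))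
        ≤ (L:ℝ)^2/(((m - L : ℕ):ℝ))^2 * A := by
      calc ∑ i ∈ range L, (cesA (m - (i+1)) (β-1) - cesA m (β-1)) * (-γ (i+1))
          ≤ ∑ i ∈ range L, ((L:ℝ)/(((m - L : ℕ):ℝ))^2 * A) * (-γ (i+1)) := by
            apply Finset.sum_le_sum
            intro i hi
            exact mul_le_mul_of_nonneg_right (hcore i hi) (hg i)
        _ = ((L:ℝ)/(((m - L : ℕ):ℝ))^2 * A) * ∑ i ∈ range L, (-γ (i+1)) := by
            rw [← Finset.mul_sum]
        _ ≤ ((L:ℝ)/(((m - L : ℕ):ℝ))^2 * A) * 1 := by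
            apply mul_le_mul_of_nonneg_left (hsum L)
            positivity
        _ ≤ (L:ℝ)^2/(((m - L : ℕ):ℝ))^2 * A := by
            rw [mul_one]
            have hL1 : (1:ℝ) ≤ (L:ℝ) := by exact_mod_cast hL
            have hdd : (L:ℝ)/(((m - L : ℕ):ℝ))^2 ≤ (L:ℝ)^2/(((m - L : ℕ):ℝ))^2 := by
              apply div_le_div_of_nonneg_right ?_ (by positivity)
              nlinarith
            exact mul_le_mul_of_nonneg_right hdd hA0.le
    have hpart2 : ∑ i ∈ Ico L m, (cesA (m - (i+1)) (β-1) - cesA m (β-1)) * (-γ (i+1))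
        ≤ (∑ i ∈ Ico L m, (-γ (i+1))) * A := by
      rw [Finset.sum_mul]
      apply Finset.sum_le_sum
      intro i _
      have h1 : cesA (m - (i+1)) (β-1) - cesA m (β-1) ≤ A := by
        have h2 := aA_le_one hβ0 hβ1 (m - (i+1))
        have h3 := aA_pos hβ0 m
        linarith
      have := hg i
      calc (cesA (m - (i+1)) (β-1) - cesA m (β-1)) * (-γ (i+1)) ≤ A * (-γ (i+1)) :=
            mul_le_mul_of_nonneg_right h1 (hg i)
        _ = (-γ (i+1)) * A := by ring
    calc (∑ i ∈ range L, (cesA (m - (i+1)) (β-1) - cesA m (β-1)) * (-γ (i+1)))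
          + ∑ i ∈ Ico L m, (cesA (m - (i+1)) (β-1) - cesA m (β-1)) * (-γ (i+1))
        ≤ (L:ℝ)^2/(((m - L : ℕ):ℝ))^2 * A + (∑ i ∈ Ico L m, (-γ (i+1))) * A := by
          exact add_le_add hpart1 hpart2
      _ = ((L:ℝ)^2/(((m - L : ℕ):ℝ))^2 + ∑ i ∈ Ico L m, (-γ (i+1))) * A := by ring
  -- combine
  rw [abs_le]
  constructor
  · have hΓ : 0 ≤ 1 - ∑ i ∈ range m, (-γ (i+1)) := by linarith [hsum m]
    have hlow : -D ≤ ∑ l ∈ range (m+1), cesA (m - l) (β-1) * γ l := by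
      rw [hSD]
      nlinarith
    have h1m : (0:ℝ) ≤ 1/(m:ℝ) * A := by positivity
    nlinarith [hlow, hDbound]
  · exact hupper

/-- Under Hardy's conditions on `(q_n)`, for every fixed `k` the matrix coefficients
`t_{k,n} = (∑_{l=0}^{n-k} A_{n-k-l}^{α_n-1} γ_l) Q_k / A_n^{α_n}` tend to `0` as
`n → ∞`. -/
theorem matrix_coefficient_tendsto_zero
    (q : ℕ → ℝ) (hq0 : q 0 = 1) (hqpos : ∀ m, 0 < q m)
    (hqconv : ∀ m, 1 ≤ m → q m / q (m - 1) ≤ q (m + 1) / q m)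
    (hqQ : Filter.Tendsto (fun m => q m / bigQ q m) Filter.atTop (nhds 0))
    (γ : ℕ → ℝ) (hγ0 : γ 0 = 1)
    (hγ : ∀ m, 1 ≤ m → ∑ j ∈ Finset.range (m + 1), q (m - j) * γ j = 0)
    (α : ℕ → ℝ) (hα : ∀ n, α n ∈ Set.Ioo (0 : ℝ) 1)
    (k : ℕ) :
    Filter.Tendsto
      (fun n => (∑ l ∈ Finset.range (n - k + 1), cesA (n - k - l) (α n - 1) * γ l) *
        bigQ q k / cesA n (α n))
      Filter.atTop (nhds 0) := by
  have hg : ∀ i, 0 ≤ -γ (i+1) := fun i =>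
    neg_nonneg.mpr (gamma_nonpos hq0 hqpos hqconv hγ0 hγ (i+1) (Nat.succ_pos i))
  have hsum : ∀ m, ∑ i ∈ range m, (-γ (i+1)) ≤ 1 :=
    gamma_abs_sum_le_one hq0 hqpos hqconv hγ0 hγ hqQ
  have hQk0 : (0:ℝ) < bigQ q k := bigQ_pos hqpos k
  set Qk := bigQ q k with hQkdef
  rw [Metric.tendsto_atTop]
  intro ε hε
  have hsummable : Summable (fun i => -γ (i+1)) := summable_of_sum_range_le hg hsum
  set ε₀ := ε / (4 * Qk) with hε₀def
  have hε₀0 : 0 < ε₀ := by positivity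
  have htend := hsummable.hasSum.tendsto_sum_nat
  have hev : ∀ᶠ M in atTop, (∑' i, -γ (i+1)) - ε₀ < ∑ i ∈ range M, -γ (i+1) :=
    htend.eventually_const_lt (by linarith)
  obtain ⟨L₀, hL₀⟩ := eventually_atTop.mp hev
  set L := max L₀ 1 with hLdef
  have hL1 : 1 ≤ L := le_max_right _ _
  have htail : ∀ M, L ≤ M → ∑ i ∈ Ico L M, -γ (i+1) ≤ ε₀ := by
    intro M hLM
    have h1 : ∑ i ∈ range M, -γ (i+1) ≤ ∑' i, -γ (i+1) :=
      Summable.sum_le_tsum (range M) (fun i _ => hg i) hsummable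
    have h2 := hL₀ L (le_max_left _ _)
    rw [Finset.sum_Ico_eq_sub _ hLM]
    linarith
  obtain ⟨M₁, hM₁⟩ := exists_nat_gt (3 * Qk / ε)
  obtain ⟨M₂, hM₂⟩ := exists_nat_gt (3 * (L:ℝ)^2 * Qk / ε)
  refine ⟨k + 2*L + M₁ + M₂ + 2, ?_⟩
  intro n hn
  set m := n - k with hmdef
  have hmk : n = m + k := by omega
  have hm2L : 2*L ≤ m := by omega
  have hm1 : 1 ≤ m := by omega
  have hmM₁ : M₁ + 1 ≤ m := by omega
  have hmLM₂ : M₂ + 1 ≤ m - L := by omega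
  have hLm : L ≤ m := by omega
  obtain ⟨hβ0, hβ1⟩ := hα n
  have hβ1' : α n ≤ 1 := le_of_lt hβ1
  have hkey := key_bound γ hγ0 hg hsum hβ0 hβ1' L m hL1 hm2L
  have hAn1 : (1:ℝ) ≤ cesA n (α n) := A_one_le hβ0 n
  have hAn0 : (0:ℝ) < cesA n (α n) := by linarith
  have hAm1 : (1:ℝ) ≤ cesA m (α n) := A_one_le hβ0 m
  have hAm0 : (0:ℝ) < cesA m (α n) := by linarith
  have hAmono : cesA m (α n) ≤ cesA n (α n) := by
    have h := A_mono hβ0 m k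
    rw [← hmk] at h
    exact h
  rw [Real.dist_eq, sub_zero]
  have habs : |(∑ l ∈ range (m+1), cesA (m - l) (α n - 1) * γ l) * Qk / cesA n (α n)|
      = |∑ l ∈ range (m+1), cesA (m - l) (α n - 1) * γ l| * Qk / cesA n (α n) := by
    rw [abs_div, abs_mul, abs_of_pos hQk0, abs_of_pos hAn0]
  rw [habs]
  set B := 1/(m:ℝ) + (L:ℝ)^2/(((m - L : ℕ):ℝ))^2 + ∑ i ∈ Ico L m, (-γ (i+1)) with hBdef
  have hY0 : (0:ℝ) ≤ ∑ i ∈ Ico L m, (-γ (i+1)) := Finset.sum_nonneg (fun i _ => hg i)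
  have hm0 : (0:ℝ) < (m:ℝ) := by exact_mod_cast hm1
  have hmL1 : 1 ≤ m - L := by omega
  have hmL0 : (0:ℝ) < ((m - L : ℕ):ℝ) := by exact_mod_cast hmL1
  have hB0 : (0:ℝ) ≤ B := by
    rw [hBdef]; positivity
  have hstep1 : |∑ l ∈ range (m+1), cesA (m - l) (α n - 1) * γ l| * Qk / cesA n (α n)
      ≤ B * Qk := by
    rw [div_le_iff₀ hAn0]
    have h1 : |∑ l ∈ range (m+1), cesA (m - l) (α n - 1) * γ l| * Qk
        ≤ (B * cesA m (α n)) * Qk := mul_le_mul_of_nonneg_right hkey hQk0.le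
    have h2 : (B * cesA m (α n)) * Qk ≤ (B * cesA n (α n)) * Qk := by
      apply mul_le_mul_of_nonneg_right _ hQk0.le
      exact mul_le_mul_of_nonneg_left hAmono hB0
    calc |∑ l ∈ range (m+1), cesA (m - l) (α n - 1) * γ l| * Qk
        ≤ (B * cesA n (α n)) * Qk := le_trans h1 h2
      _ = B * Qk * cesA n (α n) := by ring
  refine lt_of_le_of_lt hstep1 ?_
  -- B * Qk < ε
  have e1 : 1/(m:ℝ) * Qk < ε/3 := by
    have hM₁' : 3 * Qk / ε < (m:ℝ) := by
      have : (M₁:ℝ) < (m:ℝ) := by exact_mod_cast (by omega : M₁ < m)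
      linarith
    rw [div_lt_iff₀ hε] at hM₁'
    rw [div_mul_eq_mul_div, one_mul, div_lt_iff₀ hm0]
    nlinarith
  have e2 : (L:ℝ)^2/(((m - L : ℕ):ℝ))^2 * Qk < ε/3 := by
    have hM₂' : 3 * (L:ℝ)^2 * Qk / ε < ((m - L : ℕ):ℝ) := by
      have : (M₂:ℝ) < ((m - L : ℕ):ℝ) := by exact_mod_cast (by omega : M₂ < m - L)
      linarith
    rw [div_lt_iff₀ hε] at hM₂'
    have hmL1' : (1:ℝ) ≤ ((m - L : ℕ):ℝ) := by exact_mod_cast hmL1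
    have hsq : ((m - L : ℕ):ℝ) ≤ (((m - L : ℕ):ℝ))^2 := by nlinarith
    rw [div_mul_eq_mul_div, div_lt_iff₀ (by positivity : (0:ℝ) < (((m - L : ℕ):ℝ))^2)]
    nlinarith
  have e3 : (∑ i ∈ Ico L m, (-γ (i+1))) * Qk ≤ ε/4 := by
    have h1 := htail m hLm
    have h2 : (∑ i ∈ Ico L m, (-γ (i+1))) * Qk ≤ ε₀ * Qk :=
      mul_le_mul_of_nonneg_right h1 hQk0.le
    have h3 : ε₀ * Qk = ε/4 := by
      rw [hε₀def]; field_simp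
    linarith
  have : B * Qk = 1/(m:ℝ) * Qk + (L:ℝ)^2/(((m - L : ℕ):ℝ))^2 * Qk
      + (∑ i ∈ Ico L m, (-γ (i+1))) * Qk := by rw [hBdef]; ring
  rw [this]
  linarith
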